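/- arXiv:1107.3069 — 2 statements merged into one kernel-verified Lean document; each statement's English description precedes it below -/
import Mathlib

section
/- Let P ∈ ℕ, let O : ℕ³ → ℝ be coefficients with O_α = 0 whenever |α| > P, and let c, c' ∈ ℝ³ be two expansion centers. Define L : ℕ³ → ℝ by L_α = Σ_{γ ∈ ℕ³} (∏_{i=1}^3 C(α_i + γ_i, γ_i)) O_{α+γ} (c' − c)^γ, where C(n,k) denotes the binomial coefficient (the sum is finite since O is supported on degrees ≤ P). Then for every x ∈ ℝ³, Σ_{α, |α| ≤ P} O_α (x − c)^α = Σ_{α, |α| ≤ P} L_α (x − c')^α. In particular, the shift of the center of a truncated local expansion is exact. -/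
open scoped Real BigOperators

noncomputable section

/-- ℝ³ with the Euclidean norm. -/
abbrev E3 := EuclideanSpace ℝ (Fin 3)

/-- Monomial `x^α = x₁^{α₁} x₂^{α₂} x₃^{α₃}` for a multi-index `α`. -/
def mpow (x : E3) (α : Fin 3 → ℕ) : ℝ := ∏ i, x i ^ α i

/-- Degree `|α| = α₁ + α₂ + α₃` of a multi-index. -/
def deg (α : Fin 3 → ℕ) : ℕ := ∑ i, α i

/-- The (finite) set of multi-indices of degree at most `P`. -/
def degLE (P : ℕ) : Finset (Fin 3 → ℕ) :=
  (Fintype.piFinset fun _ : Fin 3 => Finset.range (P + 1)).filter fun α => deg α ≤ P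

lemma mem_degLE {P : ℕ} {α : Fin 3 → ℕ} : α ∈ degLE P ↔ deg α ≤ P := by
  constructor
  · intro h; exact (Finset.mem_filter.mp h).2
  · intro h
    refine Finset.mem_filter.mpr ⟨?_, h⟩
    refine Fintype.mem_piFinset.mpr fun i => ?_
    refine Finset.mem_range.mpr (Nat.lt_succ_of_le (le_trans ?_ h))
    exact Finset.single_le_sum (f := fun i => α i) (fun _ _ => Nat.zero_le _) (Finset.mem_univ i)

lemma deg_add (α γ : Fin 3 → ℕ) : deg (α + γ) = deg α + deg γ := by
  simp [deg, Finset.sum_add_distrib]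

lemma deg_mono {α β : Fin 3 → ℕ} (h : ∀ i, α i ≤ β i) : deg α ≤ deg β :=
  Finset.sum_le_sum fun i _ => h i

/-- **Local-to-Local (L2L)**: shifting the center of a truncated local expansion from `c`
to `c'` via the coefficients `L_α = ∑_γ (∏ᵢ C(αᵢ+γᵢ, γᵢ)) O_{α+γ} (c'-c)^γ` is exact. -/
theorem local_to_local (P : ℕ) (O : (Fin 3 → ℕ) → ℝ) (hO : ∀ α, P < deg α → O α = 0)
    (c c' : E3) :
    ∀ x : E3,
      ∑ α ∈ degLE P, O α * mpow (x - c) α =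
        ∑ α ∈ degLE P,
          (∑' γ : Fin 3 → ℕ,
            (∏ i, ((α i + γ i).choose (γ i) : ℝ)) * O (α + γ) * mpow (c' - c) γ) *
            mpow (x - c') α := by
  intro x
  set A : Fin 3 → ℝ := fun i => (x - c') i with hA
  set B : Fin 3 → ℝ := fun i => (c' - c) i with hB
  -- 1. replace the tsum by a finite sum over degLE P
  have hts : ∀ α ∈ degLE P,
      (∑' γ : Fin 3 → ℕ, (∏ i, ((α i + γ i).choose (γ i) : ℝ)) * O (α + γ) * mpow (c' - c) γ)
      = ∑ γ ∈ degLE P, (∏ i, ((α i + γ i).choose (γ i) : ℝ)) * O (α + γ) * mpow (c' - c) γ := by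
    intro α hα
    apply tsum_eq_sum
    intro γ hγ
    have h1 : P < deg γ := by
      by_contra h
      exact hγ (mem_degLE.mpr (le_of_not_gt h))
    have h0 : O (α + γ) = 0 := hO _ (by rw [deg_add]; omega)
    simp [h0]
  calc
    ∑ α ∈ degLE P, O α * mpow (x - c) α
        = ∑ β ∈ degLE P, ∑ k ∈ Fintype.piFinset (fun i => Finset.range (β i + 1)),
            O β * ∏ i, (A i ^ k i * B i ^ (β i - k i) * ((β i).choose (k i) : ℝ)) := by
          refine Finset.sum_congr rfl fun β hβ => ?_
          have hxc : ∀ i, (x - c) i = A i + B i := by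
            intro i
            simp [hA, hB]
          rw [mpow]
          have : ∏ i, (x - c) i ^ β i
              = ∏ i, ∑ k ∈ Finset.range (β i + 1),
                  (A i ^ k * B i ^ (β i - k) * ((β i).choose k : ℝ)) := by
            refine Finset.prod_congr rfl fun i _ => ?_
            rw [hxc i, add_pow]
          rw [this, Finset.prod_univ_sum, Finset.mul_sum]
    _ = ∑ p ∈ (degLE P).sigma (fun β => Fintype.piFinset (fun i => Finset.range (β i + 1))),
            O p.1 * ∏ i, (A i ^ p.2 i * B i ^ (p.1 i - p.2 i) * ((p.1 i).choose (p.2 i) : ℝ)) := by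
          rw [Finset.sum_sigma]
    _ = ∑ p ∈ ((degLE P) ×ˢ (degLE P)).filter (fun p => deg (p.1 + p.2) ≤ P),
            (∏ i, ((p.1 i + p.2 i).choose (p.2 i) : ℝ)) * O (p.1 + p.2) * mpow (c' - c) p.2
              * mpow (x - c') p.1 := by
          refine Finset.sum_nbij' (fun p => (p.2, p.1 - p.2)) (fun q => ⟨q.1 + q.2, q.1⟩)
            ?_ ?_ ?_ ?_ ?_
          · rintro ⟨β, k⟩ hp
            simp only [Finset.mem_sigma, Fintype.mem_piFinset, Finset.mem_range] at hp
            obtain ⟨hβ, hk⟩ := hp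
            have hkβ : ∀ i, k i ≤ β i := fun i => Nat.lt_succ_iff.mp (hk i)
            have hsum : k + (β - k) = β := by
              funext i
              have := hkβ i
              simp only [Pi.add_apply, Pi.sub_apply]
              omega
            refine Finset.mem_filter.mpr ⟨Finset.mem_product.mpr ⟨?_, ?_⟩, ?_⟩
            · exact mem_degLE.mpr (le_trans (deg_mono hkβ) (mem_degLE.mp hβ))
            · exact mem_degLE.mpr (le_trans (deg_mono fun i => Nat.sub_le _ _)
                (mem_degLE.mp hβ))
            · rw [hsum]; exact mem_degLE.mp hβ
          · rintro ⟨α, γ⟩ hq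
            simp only [Finset.mem_filter, Finset.mem_product] at hq
            refine Finset.mem_sigma.mpr ⟨mem_degLE.mpr hq.2, ?_⟩
            refine Fintype.mem_piFinset.mpr fun i => Finset.mem_range.mpr ?_
            simp [Pi.add_apply]
          · rintro ⟨β, k⟩ hp
            simp only [Finset.mem_sigma, Fintype.mem_piFinset, Finset.mem_range] at hp
            have hkβ : ∀ i, k i ≤ β i := fun i => Nat.lt_succ_iff.mp (hp.2 i)
            have : k + (β - k) = β := by
              funext i
              have := hkβ i
              simp only [Pi.add_apply, Pi.sub_apply]
              omega
            simp [this]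
          · rintro ⟨α, γ⟩ hq
            have : α + γ - α = γ := by
              funext i
              simp [Pi.add_apply, Pi.sub_apply]
            simp [this]
          · rintro ⟨β, k⟩ hp
            simp only [Finset.mem_sigma, Fintype.mem_piFinset, Finset.mem_range] at hp
            have hkβ : ∀ i, k i ≤ β i := fun i => Nat.lt_succ_iff.mp (hp.2 i)
            have hsum : ∀ i, k i + (β i - k i) = β i := fun i => by
              have := hkβ i; omega
            have hβeq : k + (β - k) = β := by
              funext i
              have := hkβ i
              simp only [Pi.add_apply, Pi.sub_apply]
              omega
            have hch : ∀ i, ((k i + (β - k) i).choose ((β - k) i) : ℝ)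
                = ((β i).choose (k i) : ℝ) := by
              intro i
              have : k i + (β - k) i = β i := by
                have := hkβ i
                simp only [Pi.sub_apply]
                omega
              rw [this]
              have : (β - k) i = β i - k i := rfl
              rw [this, Nat.choose_symm (hkβ i)]
            simp only [mpow, Pi.add_apply]
            rw [Finset.prod_congr rfl (fun i _ => hch i)]
            rw [Finset.prod_mul_distrib, Finset.prod_mul_distrib]
            have hBpow : ∀ i, (c' - c) i ^ (β - k) i = B i ^ (β i - k i) := fun i => rfl
            have hApow : ∀ i, (x - c') i ^ k i = A i ^ k i := fun i => rfl
            simp only [hBpow, hApow]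
            rw [hβeq]
            ring
    _ = ∑ p ∈ (degLE P) ×ˢ (degLE P),
            (∏ i, ((p.1 i + p.2 i).choose (p.2 i) : ℝ)) * O (p.1 + p.2) * mpow (c' - c) p.2
              * mpow (x - c') p.1 := by
          refine Finset.sum_filter_of_ne ?_
          rintro ⟨α, γ⟩ hq hne
          by_contra h
          have : O (α + γ) = 0 := hO _ (lt_of_not_ge h)
          simp [this] at hne
    _ = ∑ α ∈ degLE P,
          (∑' γ : Fin 3 → ℕ,
            (∏ i, ((α i + γ i).choose (γ i) : ℝ)) * O (α + γ) * mpow (c' - c) γ) *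
            mpow (x - c') α := by
          rw [Finset.sum_product]
          refine Finset.sum_congr rfl fun α hα => ?_
          rw [hts α hα, Finset.sum_mul]
end
end

section
/- Define erfc(x) = (2/√π) ∫_x^∞ exp(−t²) dt for x ∈ ℝ. For every r > 0, η > 0 and κ ≥ 0, ∫_η^∞ exp(−s²r² − κ²/(4s²)) ds = (√π/(4r)) · [ exp(κr) · erfc(ηr + κ/(2η)) + exp(−κr) · erfc(ηr − κ/(2η)) ]. -/
/-! With `g_c(s) = s r + c/(2s)` one has `g_c(s)² = s²r² + cr + c²/(4s²)` and
`g_c' + g_{-c}' = 2r`, so `s ↦ -(√π/(4r)) [e^{cr} erfc(g_c s) + e^{-cr} erfc(g_{-c} s)]`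
has derivative `exp(-s²r² - c²/(4s²))` for `s ≠ 0`. It tends to `0` at infinity, so the
identity is the fundamental theorem of calculus on `(η, ∞)`. -/

open scoped Real
open Real MeasureTheory Set Filter Topology

noncomputable section

def erfc (x : ℝ) : ℝ := 2 / Real.sqrt π * ∫ t in Set.Ioi x, Real.exp (-t ^ 2)

theorem hasDerivAt_integral_Ioi {E : Type*} [NormedAddCommGroup E] [NormedSpace ℝ E]
    [CompleteSpace E]
    {f : ℝ → E} {u : ℝ} (hf : Integrable f) (hfu : ContinuousAt f u) :
    HasDerivAt (fun x => ∫ t in Ioi x, f t) (-f u) u := by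
  have hprim : HasDerivAt (fun x => ∫ t in (0 : ℝ)..x, f t) (f u) u :=
    intervalIntegral.integral_hasDerivAt_right hf.intervalIntegrable
      hf.aestronglyMeasurable.stronglyMeasurableAtFilter hfu
  have htail : (fun x => ∫ t in Ioi x, f t) =
      fun x => (∫ t in Ioi 0, f t) - ∫ t in (0 : ℝ)..x, f t := by
    ext x
    rw [← intervalIntegral.integral_Ioi_sub_Ioi' hf.integrableOn hf.integrableOn, sub_sub_cancel]
  rw [htail]
  exact hprim.const_sub _

theorem integrable_exp_neg_sq : Integrable fun t : ℝ => exp (-t ^ 2) := by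
  simpa using integrable_exp_neg_mul_sq (b := 1) one_pos

theorem hasDerivAt_erfc (x : ℝ) : HasDerivAt erfc (-(2 / √π * exp (-x ^ 2))) x := by
  have h := (hasDerivAt_integral_Ioi integrable_exp_neg_sq
    (by fun_prop : ContinuousAt (fun t : ℝ => exp (-t ^ 2)) x)).const_mul (2 / √π)
  unfold erfc
  simpa only [mul_neg] using h

theorem tendsto_erfc_atTop : Tendsto erfc atTop (𝓝 0) := by
  unfold erfc
  simpa only [mul_zero, id_eq] using (tendsto_integral_Ioi_zero (f := fun t : ℝ => exp (-t ^ 2))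
    (μ := volume) tendsto_id).const_mul (2 / √π)

theorem hasDerivAt_mul_add_div_two_mul (r c : ℝ) {x : ℝ} (hx : x ≠ 0) :
    HasDerivAt (fun s => s * r + c / (2 * s)) (r - c / (2 * x ^ 2)) x := by
  have hf : (fun s => s * r + c / (2 * s)) = fun s => s * r + c / 2 * s⁻¹ := by
    funext s
    ring
  rw [hf]
  exact (((hasDerivAt_id' x).mul_const r).add ((hasDerivAt_inv hx).const_mul (c / 2))).congr_deriv
    (by ring)

theorem tendsto_mul_add_div_two_mul_atTop {r : ℝ} (hr : 0 < r) (c : ℝ) :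
    Tendsto (fun s => s * r + c / (2 * s)) atTop atTop :=
  (tendsto_id.atTop_mul_const hr).atTop_add
    (tendsto_const_nhds.div_atTop (tendsto_id.const_mul_atTop two_pos))

theorem exp_neg_sq_mul_add_div (r c : ℝ) {s : ℝ} (hs : s ≠ 0) :
    exp (-(s * r + c / (2 * s)) ^ 2) =
      exp (-(c * r)) * exp (-(s ^ 2 * r ^ 2) - c ^ 2 / (4 * s ^ 2)) := by
  rw [← exp_add]
  congr 1
  field_simp
  ring

theorem hasDerivAt_exp_mul_erfc_mul_add_div (r c : ℝ) {x : ℝ} (hx : x ≠ 0) :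
    HasDerivAt (fun s => exp (c * r) * erfc (s * r + c / (2 * s)))
      (-(2 / √π) * (r - c / (2 * x ^ 2)) * exp (-(x ^ 2 * r ^ 2) - c ^ 2 / (4 * x ^ 2))) x := by
  have h := ((hasDerivAt_erfc _).comp x (hasDerivAt_mul_add_div_two_mul r c hx)).const_mul
    (exp (c * r))
  refine h.congr_deriv ?_
  rw [exp_neg_sq_mul_add_div r c hx, exp_neg]
  field_simp

theorem integrable_exp_neg_sq_mul_sq_sub_div {r : ℝ} (hr : r ≠ 0) (c : ℝ) :
    Integrable fun s : ℝ => exp (-(s ^ 2 * r ^ 2) - c ^ 2 / (4 * s ^ 2)) := by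
  refine (integrable_exp_neg_mul_sq (b := r ^ 2) (by positivity)).mono'
    (by fun_prop) (ae_of_all _ fun s => ?_)
  have hdiv : 0 ≤ c ^ 2 / (4 * s ^ 2) := by positivity
  rw [norm_of_nonneg (exp_nonneg _), exp_le_exp]
  linarith

/-- An antiderivative of `s ↦ exp (-(s ^ 2 * r ^ 2) - c ^ 2 / (4 * s ^ 2))` on `s ≠ 0`. -/
def ewaldPrimitive (r c s : ℝ) : ℝ :=
  -(√π / (4 * r)) *
    (exp (c * r) * erfc (s * r + c / (2 * s)) + exp (-(c * r)) * erfc (s * r - c / (2 * s)))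

theorem ewaldPrimitive_eq (r c : ℝ) : ewaldPrimitive r c = fun s =>
    -(√π / (4 * r)) *
      (exp (c * r) * erfc (s * r + c / (2 * s)) + exp (-c * r) * erfc (s * r + -c / (2 * s))) := by
  funext s
  rw [ewaldPrimitive, neg_mul c r, neg_div (2 * s) c, ← sub_eq_add_neg]

theorem hasDerivAt_ewaldPrimitive {r : ℝ} (hr : r ≠ 0) (c : ℝ) {x : ℝ} (hx : x ≠ 0) :
    HasDerivAt (ewaldPrimitive r c) (exp (-(x ^ 2 * r ^ 2) - c ^ 2 / (4 * x ^ 2))) x := by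
  have h := ((hasDerivAt_exp_mul_erfc_mul_add_div r c hx).add
    (hasDerivAt_exp_mul_erfc_mul_add_div r (-c) hx)).const_mul (-(√π / (4 * r)))
  rw [neg_sq] at h
  rw [ewaldPrimitive_eq]
  refine h.congr_deriv ?_
  have hπ : √π ≠ 0 := (sqrt_pos.2 pi_pos).ne'
  field_simp
  ring

theorem tendsto_ewaldPrimitive_atTop {r : ℝ} (hr : 0 < r) (c : ℝ) :
    Tendsto (ewaldPrimitive r c) atTop (𝓝 0) := by
  have h := ((tendsto_erfc_atTop.comp (tendsto_mul_add_div_two_mul_atTop hr c)).const_mul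
    (exp (c * r))).add ((tendsto_erfc_atTop.comp
      (tendsto_mul_add_div_two_mul_atTop hr (-c))).const_mul (exp (-c * r)))
  rw [ewaldPrimitive_eq]
  simpa only [mul_zero, add_zero, Function.comp_def] using
    h.const_mul (-(√π / (4 * r)))

theorem ewald_real_space_term_general (r η κ : ℝ) (hr : 0 < r) (hη : 0 < η) :
    ∫ s in Set.Ioi η, Real.exp (-(s ^ 2 * r ^ 2) - κ ^ 2 / (4 * s ^ 2)) =
      Real.sqrt π / (4 * r) *
        (Real.exp (κ * r) * erfc (η * r + κ / (2 * η)) +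
          Real.exp (-(κ * r)) * erfc (η * r - κ / (2 * η))) := by
  rw [integral_Ioi_of_hasDerivAt_of_tendsto'
    (fun x hx => hasDerivAt_ewaldPrimitive hr.ne' κ (hη.trans_le hx).ne')
    (integrable_exp_neg_sq_mul_sq_sub_div hr.ne' κ).integrableOn
    (tendsto_ewaldPrimitive_atTop hr κ), ewaldPrimitive]
  ring

/-- **Real-space Ewald term of the periodic Yukawa Green's function**: for `r > 0`,
`η > 0` and `κ ≥ 0`,
`∫_η^∞ exp(−s²r² − κ²/(4s²)) ds
  = (√π/(4r)) [e^{κr} erfc(ηr + κ/(2η)) + e^{−κr} erfc(ηr − κ/(2η))]`. -/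
theorem ewald_real_space_term (r η κ : ℝ) (hr : 0 < r) (hη : 0 < η) (hκ : 0 ≤ κ) :
    ∫ s in Set.Ioi η, Real.exp (-(s ^ 2 * r ^ 2) - κ ^ 2 / (4 * s ^ 2)) =
      Real.sqrt π / (4 * r) *
        (Real.exp (κ * r) * erfc (η * r + κ / (2 * η)) +
          Real.exp (-(κ * r)) * erfc (η * r - κ / (2 * η))) :=
  ewald_real_space_term_general r η κ hr hη
end
end
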